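/- arXiv:2401.07827 — 2 statements merged into one kernel-verified Lean document; each statement's English description precedes it below -/
import Mathlib

section
/- If A is a proper subset of a finite set B, then the density of the free magma M_A inside M_B is zero: lim_{n→∞} |M_A|_{≤n}/|M_B|_{≤n} = 0. -/
/-!
An element of `M_γ` of length `k` is the same thing as a bracketing shape (an element of
`M_Unit` of length `k`) together with a word of `k` generators, so `|M_γ|_{=k} = T_k |γ|^k` with
`T_k` independent of `γ`. Padding on the right with a fixed generator gives
`|M_γ|_{≤n} ≤ (n + 1) |M_γ|_{=n}`. Hence the ratio is at most `(n + 1) (|A| / |B|)^n`, which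
tends to `0` because `|A| < |B|`.
-/

open Filter

def FreeMagma.len {α : Type*} : FreeMagma α → ℕ
  | FreeMagma.of _ => 1
  | FreeMagma.mul x y => x.len + y.len

noncomputable def cnt {α : Type*} (X : Set (FreeMagma α)) (n : ℕ) : ℕ :=
  Nat.card {x : FreeMagma α // x ∈ X ∧ x.len = n}

noncomputable def cntLe {α : Type*} (X : Set (FreeMagma α)) (n : ℕ) : ℕ :=
  Nat.card {x : FreeMagma α // x ∈ X ∧ x.len ≤ n}

namespace FreeMagma

variable {α β : Type*}

@[simp] lemma len_of (a : α) : (of a).len = 1 := rfl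

@[simp] lemma len_mul (x y : FreeMagma α) : (x * y).len = x.len + y.len := rfl

lemma len_pos (x : FreeMagma α) : 0 < x.len := by
  induction x with
  | ih1 => simp
  | ih2 x y hx _ => simp only [len_mul]; omega

@[simp] lemma len_map (f : α → β) (x : FreeMagma α) : (map f x).len = x.len := by
  induction x with
  | ih1 => rfl
  | ih2 x y hx hy => simp [hx, hy]

instance [IsEmpty α] : IsEmpty (FreeMagma α) where
  false x := by
    induction x with
    | ih1 a => exact isEmptyElim a
    | ih2 _ _ hx => exact hx

lemma map_injective {f : α → β} (hf : Function.Injective f) :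
    Function.Injective (map f) := by
  intro x y h
  induction x generalizing y with
  | ih1 a =>
    cases y with
    | of b =>
      injection h with h
      rw [hf h]
    | mul => cases h
  | ih2 x₁ x₂ ih₁ ih₂ =>
    cases y with
    | of => cases h
    | mul y₁ y₂ =>
      injection h with h₁ h₂
      rw [ih₁ h₁, ih₂ h₂, mul_eq]

lemma mul_of_injective (a : α) : Function.Injective (· * of a) :=
  fun _ _ h => by injection h

lemma len_iterate_mul_of (a : α) (k : ℕ) (x : FreeMagma α) :
    ((· * of a)^[k] x).len = x.len + k := by
  induction k with
  | zero => rfl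
  | succ k ih => rw [Function.iterate_succ_apply', len_mul, ih, len_of, add_assoc]

lemma finite_setOf_len_le [Finite α] (n : ℕ) : {x : FreeMagma α | x.len ≤ n}.Finite := by
  induction n with
  | zero => simp [(len_pos _).ne']
  | succ n ih =>
    refine ((Set.finite_range of).union (ih.image2 (· * ·) ih)).subset ?_
    intro x hx
    cases x with
    | of a => exact Or.inl ⟨a, rfl⟩
    | mul y z =>
      change y.len + z.len ≤ n + 1 at hx
      have := len_pos y
      have := len_pos z
      exact Or.inr ⟨y, show y.len ≤ n by omega, z, show z.len ≤ n by omega, rfl⟩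

def leaves : FreeMagma α → List α
  | of a => [a]
  | x * y => leaves x ++ leaves y

@[simp] lemma leaves_of (a : α) : leaves (of a) = [a] := rfl

@[simp] lemma leaves_mul (x y : FreeMagma α) : leaves (x * y) = leaves x ++ leaves y := rfl

def shape (x : FreeMagma α) : FreeMagma Unit := map (fun _ => ()) x

@[simp] lemma length_leaves (x : FreeMagma α) : (leaves x).length = x.len := by
  induction x with
  | ih1 => rfl
  | ih2 x y hx hy => simp [hx, hy]

@[simp] lemma len_shape (x : FreeMagma α) : (shape x).len = x.len := len_map _ x

lemma eq_of_shape_eq_of_leaves_eq {x y : FreeMagma α} (hs : shape x = shape y)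
    (hl : leaves x = leaves y) : x = y := by
  induction x generalizing y with
  | ih1 a =>
    cases y with
    | of b =>
      rw [leaves_of, leaves_of, List.singleton_inj] at hl
      rw [hl]
    | mul => cases hs
  | ih2 x₁ x₂ ih₁ ih₂ =>
    cases y with
    | of => cases hs
    | mul y₁ y₂ =>
      injection hs with hs₁ hs₂
      have hlen : (leaves x₁).length = (leaves y₁).length := by
        rw [length_leaves, length_leaves, ← len_shape, ← len_shape y₁]
        exact congrArg len hs₁
      obtain ⟨hl₁, hl₂⟩ := List.append_inj hl hlen
      rw [ih₁ hs₁ hl₁, ih₂ hs₂ hl₂, mul_eq]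

lemma exists_shape_eq_leaves_eq (s : FreeMagma Unit) (l : List α) (hl : l.length = s.len) :
    ∃ x : FreeMagma α, shape x = s ∧ leaves x = l := by
  induction s generalizing l with
  | ih1 =>
    obtain ⟨a, rfl⟩ := List.length_eq_one_iff.mp hl
    exact ⟨of a, rfl, rfl⟩
  | ih2 s₁ s₂ ih₁ ih₂ =>
    have := len_pos s₂
    obtain ⟨x₁, hs₁, hl₁⟩ := ih₁ (l.take s₁.len) (by simp only [len_mul] at hl; simp only [List.length_take]; omega)
    obtain ⟨x₂, hs₂, hl₂⟩ := ih₂ (l.drop s₁.len) (by simp only [len_mul] at hl; simp only [List.length_drop]; omega)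
    refine ⟨x₁ * x₂, ?_, ?_⟩
    · rw [← hs₁, ← hs₂]; rfl
    · rw [leaves_mul, hl₁, hl₂, List.take_append_drop]

noncomputable def shapeLeavesEquiv (n : ℕ) :
    {x : FreeMagma α // x.len = n} ≃ {s : FreeMagma Unit // s.len = n} × List.Vector α n :=
  Equiv.ofBijective (fun x => (⟨shape x.1, by simp [x.2]⟩, ⟨leaves x.1, by simp [x.2]⟩)) <| by
    refine ⟨fun x y h => Subtype.ext ?_, fun ⟨⟨s, hs⟩, ⟨l, hl⟩⟩ => ?_⟩
    · obtain ⟨hs, hl⟩ := Prod.ext_iff.mp h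
      exact eq_of_shape_eq_of_leaves_eq (congrArg Subtype.val hs) (congrArg Subtype.val hl)
    · obtain ⟨x, rfl, rfl⟩ := exists_shape_eq_leaves_eq s l (hl.trans hs.symm)
      exact ⟨⟨x, len_shape x ▸ hs⟩, rfl⟩

lemma cnt_univ (n : ℕ) :
    cnt (Set.univ : Set (FreeMagma α)) n = Nat.card {x : FreeMagma α // x.len = n} :=
  Nat.card_congr <| Equiv.subtypeEquivRight fun _ => by simp

lemma cnt_univ_eq_cnt_unit_mul (n : ℕ) :
    cnt (Set.univ : Set (FreeMagma α)) n =
      cnt (Set.univ : Set (FreeMagma Unit)) n * Nat.card α ^ n := by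
  rw [cnt_univ, cnt_univ, Nat.card_congr (shapeLeavesEquiv n), Nat.card_prod,
    Nat.card_congr (Equiv.vectorEquivFin α n), Nat.card_fun, Nat.card_fin]

lemma finite_of_forall_len_le [Finite α] {p : FreeMagma α → Prop} (n : ℕ)
    (hp : ∀ x, p x → x.len ≤ n) : Finite {x // p x} :=
  ((finite_setOf_len_le n).subset hp).to_subtype

lemma cnt_le_cntLe [Finite α] (X : Set (FreeMagma α)) (n : ℕ) : cnt X n ≤ cntLe X n :=
  have := finite_of_forall_len_le (p := fun x => x ∈ X ∧ x.len ≤ n) n fun _ hx => hx.2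
  Nat.card_le_card_of_injective (fun x => ⟨x.1, x.2.1, x.2.2.le⟩)
    fun _ _ h => Subtype.ext (Subtype.mk.inj h)

lemma cnt_univ_pos [Finite α] [Nonempty α] {n : ℕ} (hn : 0 < n) :
    0 < cnt (Set.univ : Set (FreeMagma α)) n := by
  have := finite_of_forall_len_le (p := fun x : FreeMagma α => x ∈ Set.univ ∧ x.len = n) n
    fun _ hx => hx.2.le
  obtain ⟨a⟩ := ‹Nonempty α›
  have : Nonempty {x : FreeMagma α // x ∈ Set.univ ∧ x.len = n} :=
    ⟨⟨(· * of a)^[n - 1] (of a), trivial, by rw [len_iterate_mul_of, len_of]; omega⟩⟩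
  exact Nat.card_pos

lemma cntLe_univ_le_succ_mul_cnt_univ [Finite α] (n : ℕ) :
    cntLe (Set.univ : Set (FreeMagma α)) n ≤ (n + 1) * cnt (Set.univ : Set (FreeMagma α)) n := by
  cases isEmpty_or_nonempty α with
  | inl => simp [cntLe]
  | inr hα =>
    obtain ⟨a⟩ := hα
    have := finite_of_forall_len_le (p := fun x : FreeMagma α => x ∈ Set.univ ∧ x.len = n) n
      fun _ hx => hx.2.le
    let pad (x : {x : FreeMagma α // x ∈ Set.univ ∧ x.len ≤ n}) :
        Fin (n + 1) × {x : FreeMagma α // x ∈ Set.univ ∧ x.len = n} :=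
      (⟨x.1.len, by omega⟩,
        ⟨(· * of a)^[n - x.1.len] x.1, trivial, by rw [len_iterate_mul_of]; omega⟩)
    have hpad : Function.Injective pad := by
      intro x y h
      obtain ⟨hlen, hx⟩ := Prod.ext_iff.mp h
      replace hlen : x.1.len = y.1.len := congrArg Fin.val hlen
      replace hx := congrArg Subtype.val hx
      simp only [pad, hlen] at hx
      exact Subtype.ext ((mul_of_injective a).iterate _ hx)
    calc cntLe Set.univ n ≤ Nat.card (Fin (n + 1) × _) := Nat.card_le_card_of_injective pad hpad
      _ = (n + 1) * cnt Set.univ n := by rw [Nat.card_prod, Nat.card_fin, cnt]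

lemma cntLe_range_map {f : α → β} (hf : Function.Injective f) (n : ℕ) :
    cntLe (Set.range (map f)) n = cntLe (Set.univ : Set (FreeMagma α)) n :=
  Nat.card_congr <| .symm <| .ofBijective
    (fun x => ⟨map f x.1, Set.mem_range_self _, (len_map f x.1).trans_le x.2.2⟩)
    ⟨fun _ _ h => Subtype.ext (map_injective hf (congrArg Subtype.val h)),
      fun ⟨_, ⟨x, rfl⟩, hx⟩ => ⟨⟨x, trivial, len_map f x ▸ hx⟩, rfl⟩⟩

lemma cntLe_univ_div_cntLe_univ_le [Finite α] [Finite β] [Nonempty β] {n : ℕ} (hn : 0 < n) :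
    (cntLe (Set.univ : Set (FreeMagma α)) n : ℝ) / cntLe (Set.univ : Set (FreeMagma β)) n ≤
      (n + 1) * ((Nat.card α : ℝ) / Nat.card β) ^ n := by
  have hT : (cnt (Set.univ : Set (FreeMagma Unit)) n : ℝ) ≠ 0 := by
    exact_mod_cast (cnt_univ_pos hn).ne'
  calc (cntLe (Set.univ : Set (FreeMagma α)) n : ℝ) / cntLe (Set.univ : Set (FreeMagma β)) n
      ≤ ((n + 1) * cnt (Set.univ : Set (FreeMagma α)) n : ℕ) /
          (cnt (Set.univ : Set (FreeMagma β)) n : ℕ) :=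
        div_le_div₀ (by positivity) (by exact_mod_cast cntLe_univ_le_succ_mul_cnt_univ n)
          (by exact_mod_cast cnt_univ_pos hn) (by exact_mod_cast cnt_le_cntLe _ n)
    _ = (n + 1) * ((Nat.card α : ℝ) / Nat.card β) ^ n := by
        rw [cnt_univ_eq_cnt_unit_mul, cnt_univ_eq_cnt_unit_mul (α := β)]
        push_cast
        rw [mul_div_assoc, mul_div_mul_left _ _ hT, div_pow]

end FreeMagma

theorem stmt_8 (B : Type*) [Fintype B] (A : Set B) (hA : A ≠ Set.univ) :
    Tendsto (fun n =>
        (cntLe (Set.range (FreeMagma.map (Subtype.val : A → B))) n : ℝ) /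
          (cntLe (Set.univ : Set (FreeMagma B)) n : ℝ))
      atTop (nhds 0) := by
  have hAB : Nat.card A < Nat.card B := by
    simpa [Nat.card_coe_set_eq] using Set.ncard_lt_ncard (Set.ssubset_univ_iff.2 hA)
  have hB : 0 < Nat.card B := by omega
  have : Nonempty B := (Nat.card_pos_iff.mp hB).1
  have hr : (Nat.card A : ℝ) / Nat.card B < 1 :=
    (div_lt_one (by exact_mod_cast hB)).2 (by exact_mod_cast hAB)
  have hlim : Tendsto (fun n : ℕ => ((n : ℝ) + 1) * ((Nat.card A : ℝ) / Nat.card B) ^ n)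
      atTop (nhds 0) := by
    simpa [add_mul] using (tendsto_self_mul_const_pow_of_lt_one (by positivity) hr).add
      (tendsto_pow_atTop_nhds_zero_of_lt_one (by positivity) hr)
  refine squeeze_zero (fun n => by positivity) (fun n => ?_) hlim
  rcases Nat.eq_zero_or_pos n with rfl | hn
  · simp [cntLe, (FreeMagma.len_pos _).ne']
  rw [FreeMagma.cntLe_range_map Subtype.val_injective]
  exact FreeMagma.cntLe_univ_div_cntLe_univ_le hn
end

section
/- For any positive integer p, lim_{n→∞} C_{np−1} / (C_{p−1} + C_{2p−1} + ⋯ + C_{np−1}) = 1 − 1/4^p, where C_k denotes the k-th Catalan number. -/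
/-!
Since `C (m + 1) / C m = 2 (2m + 1) / (m + 2) → 4`, the terms `b k = C ((k + 1) p - 1)` satisfy
`b k / b (k + 1) → 4⁻ᵖ`. For any positive sequence with `a n / a (n + 1) → r` and divergent
partial sums `S n = ∑_{k ≤ n} a k`, telescoping gives
`a n - (1 - r) S n = r a 0 - ∑_{k < n} (a k - r a (k + 1))`, and the summands are
`o(a (k + 1))`, so the right-hand side is `o(S n)`; hence `a n / S n → 1 - r`.
-/
open Filter Finset Asymptotics Topology

theorem catalan_pos (n : ℕ) : 0 < catalan n :=
  Nat.pos_of_mul_pos_left ((succ_mul_catalan_eq_centralBinom n).symm ▸ n.centralBinom_pos)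

theorem succ_succ_mul_catalan_succ (n : ℕ) :
    (n + 2) * catalan (n + 1) = 2 * (2 * n + 1) * catalan n := by
  refine Nat.eq_of_mul_eq_mul_left n.succ_pos ?_
  calc (n + 1) * ((n + 2) * catalan (n + 1)) = (n + 1) * (n + 1).centralBinom := by
        rw [← succ_mul_catalan_eq_centralBinom]
    _ = 2 * (2 * n + 1) * n.centralBinom := Nat.succ_mul_centralBinom_succ n
    _ = (n + 1) * (2 * (2 * n + 1) * catalan n) := by
        rw [← succ_mul_catalan_eq_centralBinom]; ring

theorem catalan_succ_div_catalan (n : ℕ) :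
    (catalan (n + 1) : ℝ) / catalan n = 2 * (2 * n + 1) / (n + 2) := by
  have h : ((n : ℝ) + 2) * catalan (n + 1) = 2 * (2 * n + 1) * catalan n := by
    exact_mod_cast succ_succ_mul_catalan_succ n
  have hc : (catalan n : ℝ) ≠ 0 := by exact_mod_cast (catalan_pos n).ne'
  rw [div_eq_div_iff hc (by positivity)]
  linarith

theorem tendsto_catalan_succ_div_catalan :
    Tendsto (fun n => (catalan (n + 1) : ℝ) / catalan n) atTop (𝓝 4) := by
  have h : Tendsto (fun n : ℕ => 4 - 6 / ((n : ℝ) + 2)) atTop (𝓝 (4 - 0)) :=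
    tendsto_const_nhds.sub <| tendsto_const_nhds.div_atTop <|
      tendsto_atTop_add_const_right _ 2 tendsto_natCast_atTop_atTop
  refine (sub_zero (4 : ℝ) ▸ h).congr fun n => ?_
  rw [catalan_succ_div_catalan]
  field_simp
  ring

theorem tendsto_add_div_of_tendsto_succ_div {K : Type*} [Field K] [TopologicalSpace K]
    [ContinuousMul K] {f : ℕ → K} {L : K} (hf : ∀ n, f n ≠ 0)
    (h : Tendsto (fun n => f (n + 1) / f n) atTop (𝓝 L)) (q : ℕ) :
    Tendsto (fun n => f (n + q) / f n) atTop (𝓝 (L ^ q)) := by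
  induction q with
  | zero => simpa [div_self (hf _)] using tendsto_const_nhds
  | succ q ih =>
    rw [pow_succ']
    refine ((h.comp (tendsto_add_atTop_nat q)).mul ih).congr fun n => ?_
    simp only [Function.comp_apply, ← add_assoc]
    rw [div_mul_div_cancel₀ (hf _)]

theorem tendsto_div_sum_range_succ_of_tendsto_div_succ {a : ℕ → ℝ} {r : ℝ}
    (ha : ∀ n, 0 < a n) (hr : Tendsto (fun n => a n / a (n + 1)) atTop (𝓝 r))
    (hsum : Tendsto (fun n => ∑ k ∈ range n, a k) atTop atTop) :
    Tendsto (fun n => a n / ∑ k ∈ range (n + 1), a k) atTop (𝓝 (1 - r)) := by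
  set S := fun n => ∑ k ∈ range (n + 1), a k
  have hS : Tendsto S atTop atTop := hsum.comp (tendsto_add_atTop_nat 1)
  have hS_shift (n : ℕ) : ∑ k ∈ range n, a (k + 1) = S n - a 0 := by
    simp [S, sum_range_succ']
  have hstep : (fun k => a k - r * a (k + 1)) =o[atTop] fun k => a (k + 1) := by
    rw [isLittleO_iff_tendsto fun k h => absurd h (ha _).ne', ← sub_self r]
    refine (hr.sub_const r).congr fun k => ?_
    field_simp [(ha (k + 1)).ne']
  have hsum_step := hstep.sum_range (fun k => (ha _).le) <| by
    simpa only [hS_shift, ← sub_eq_add_neg] using tendsto_atTop_add_const_right _ (-a 0) hS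
  have hbound : (fun n => ∑ k ∈ range n, a (k + 1)) =O[atTop] S := by
    refine IsBigO.of_bound 1 (Eventually.of_forall fun n => ?_)
    have hpos : 0 ≤ S n - a 0 := hS_shift n ▸ sum_nonneg fun k _ => (ha _).le
    rw [hS_shift, one_mul, Real.norm_of_nonneg hpos, Real.norm_of_nonneg (by linarith [ha 0])]
    linarith [ha 0]
  have hconst : (fun _ => r * a 0) =o[atTop] S :=
    isLittleO_const_left.2 (Or.inr (tendsto_norm_atTop_atTop.comp hS))
  have key : (fun n => a n - (1 - r) * S n) =o[atTop] S := by
    refine (hconst.sub (hsum_step.trans_isBigO hbound)).congr_left fun n => ?_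
    simp only [sum_sub_distrib, ← mul_sum, hS_shift, S, sum_range_succ]
    ring
  rw [← tendsto_sub_nhds_zero_iff]
  refine key.tendsto_div_nhds_zero.congr' ?_
  filter_upwards [hS.eventually_gt_atTop 0] with n hn
  change _ = a n / S n - (1 - r)
  field_simp

theorem sum_Icc_one_eq_sum_range_succ {M : Type*} [AddCommMonoid M] (f : ℕ → M) (n : ℕ) :
    ∑ k ∈ Icc 1 n, f k = ∑ k ∈ range n, f (k + 1) := by
  rw [range_eq_Ico, sum_Ico_add', zero_add, Finset.Ico_add_one_right_eq_Icc]

theorem stmt_12 (p : ℕ) (hp : 0 < p) :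
    Tendsto (fun n => (catalan (n * p - 1) : ℝ) /
        (∑ k ∈ Finset.Icc 1 n, (catalan (k * p - 1) : ℝ)))
      atTop (nhds (1 - 1 / 4 ^ p)) := by
  set b : ℕ → ℝ := fun k => catalan ((k + 1) * p - 1)
  have hb_one (k : ℕ) : 1 ≤ b k := Nat.one_le_cast.2 (catalan_pos _)
  have hidx : Tendsto (fun k => (k + 1) * p - 1) atTop atTop :=
    tendsto_atTop_mono (fun k => by
      have := Nat.le_mul_of_pos_right (k + 1) hp
      dsimp only [id]
      omega) tendsto_id
  have hratio : Tendsto (fun k => b k / b (k + 1)) atTop (𝓝 (1 / 4 ^ p)) := by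
    have hcat := tendsto_add_div_of_tendsto_succ_div (f := fun n => (catalan n : ℝ))
      (fun n => Nat.cast_ne_zero.2 (catalan_pos n).ne') tendsto_catalan_succ_div_catalan p
    refine (one_div ((4 : ℝ) ^ p) ▸ (hcat.comp hidx).inv₀ (by positivity)).congr fun k => ?_
    have hidx_succ : (k + 1 + 1) * p - 1 = (k + 1) * p - 1 + p := by
      have := Nat.le_mul_of_pos_right (k + 1) hp
      rw [add_mul, one_mul]
      omega
    simp only [Function.comp_apply, inv_div, b, hidx_succ]
  have hsum : Tendsto (fun n => ∑ k ∈ range n, b k) atTop atTop :=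
    tendsto_atTop_mono (fun n => by
      simpa using card_nsmul_le_sum (range n) b 1 fun k _ => hb_one k) tendsto_natCast_atTop_atTop
  rw [← tendsto_add_atTop_iff_nat 1]
  refine (tendsto_div_sum_range_succ_of_tendsto_div_succ (fun k => one_pos.trans_le (hb_one k))
    hratio hsum).congr fun n => ?_
  rw [sum_Icc_one_eq_sum_range_succ]
end
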